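/- Let (A,B,C,E) be the CCF of a minimal encoder G of an (n,k,δ) convolutional code C and (Â,B̂,Ĉ,Ê) the CCF of a minimal encoder Ĝ of the dual code Ĉ. Then N + N̂^T = −Ĉ C^T. -/

import Mathlib

open Polynomial Matrix
open scoped Classical

noncomputable section

namespace ConvCode

variable (F : Type) [Field F] [Fintype F]

/-- Hamming weight of a vector. -/
def wt {n : ℕ} (a : Fin n → F) : ℕ := (Finset.univ.filter fun j => a j ≠ 0).card

/-- Weight enumerator of a set of vectors in `F^n`, as a polynomial in `ℂ[W]`. -/
def weSet {n : ℕ} (S : Set (Fin n → F)) : Polynomial ℂ :=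
  ∑ a ∈ (Set.toFinite S).toFinset, (Polynomial.X : Polynomial ℂ) ^ wt F a

/-- The `i`-th row degree of a polynomial matrix. -/
def rowDeg {k n : ℕ} (G : Matrix (Fin k) (Fin n) (Polynomial F)) (i : Fin k) : ℕ :=
  Finset.univ.sup fun j => (G i j).natDegree

/-- `G` is basic: it has a polynomial right inverse. -/
def IsBasic {k n : ℕ} (G : Matrix (Fin k) (Fin n) (Polynomial F)) : Prop :=
  ∃ H : Matrix (Fin n) (Fin k) (Polynomial F), G * H = 1

/-- The degree of the code: maximal degree of the `k × k` minors of `G`. -/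
def codeDeg {k n : ℕ} (G : Matrix (Fin k) (Fin n) (Polynomial F)) : ℕ :=
  Finset.univ.sup fun f : Fin k ↪ Fin n => ((G.submatrix id f).det).natDegree

/-- A minimal (basic) encoder: the sum of the row degrees equals the degree of the code. -/
def IsMinimalEncoder {k n : ℕ} (G : Matrix (Fin k) (Fin n) (Polynomial F)) : Prop :=
  IsBasic F G ∧ ∑ i, rowDeg F G i = codeDeg F G

/-- The convolutional code generated by the encoder `G`. -/
def code {k n : ℕ} (G : Matrix (Fin k) (Fin n) (Polynomial F)) : Set (Fin n → Polynomial F) :=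
  Set.range fun u : Fin k → Polynomial F => u ᵥ* G

/-- The (module-theoretic) dual of a convolutional code. -/
def dualCode {n : ℕ} (𝓒 : Set (Fin n → Polynomial F)) : Set (Fin n → Polynomial F) :=
  {w | ∀ v ∈ 𝓒, w ⬝ᵥ v = 0}

/-- The sequence-space pairing `⟨⟨v,w⟩⟩ = ∑_t v_t w_tᵀ`. -/
def seqPair {n : ℕ} (v w : Fin n → Polynomial F) : F :=
  ∑ j, ∑ t ∈ Finset.range ((v j).natDegree + 1), (v j).coeff t * (w j).coeff t

/-- The sequence space dual of a convolutional code. -/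
def seqDual {n : ℕ} (𝓒 : Set (Fin n → Polynomial F)) : Set (Fin n → Polynomial F) :=
  {w | ∀ v ∈ 𝓒, ∀ l : ℕ, seqPair F v (fun j => Polynomial.X ^ l * w j) = 0}

/-- Index set of the state space of the controller canonical form:
a state index is a pair `(i, ν)` with `i` a row index and `ν < δ_i`. -/
abbrev StateIdx (k : ℕ) (d : Fin k → ℕ) : Type := (i : Fin k) × Fin (d i)

/-- The state-transition matrix `A` of the controller canonical form. -/
def ccfA {k : ℕ} (d : Fin k → ℕ) : Matrix (StateIdx k d) (StateIdx k d) F :=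
  Matrix.of fun s t => if s.1 = t.1 ∧ (s.2 : ℕ) + 1 = (t.2 : ℕ) then 1 else 0

/-- The input-to-state matrix `B` of the controller canonical form. -/
def ccfB {k : ℕ} (d : Fin k → ℕ) : Matrix (Fin k) (StateIdx k d) F :=
  Matrix.of fun i t => if t.1 = i ∧ (t.2 : ℕ) = 0 then 1 else 0

/-- The state-to-output matrix `C` of the controller canonical form. -/
def ccfC {k n : ℕ} (d : Fin k → ℕ) (G : Matrix (Fin k) (Fin n) (Polynomial F)) :
    Matrix (StateIdx k d) (Fin n) F :=
  Matrix.of fun s j => (G s.1 j).coeff ((s.2 : ℕ) + 1)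

/-- The matrix `E = G(0)` of the controller canonical form. -/
def ccfE {k n : ℕ} (G : Matrix (Fin k) (Fin n) (Polynomial F)) : Matrix (Fin k) (Fin n) F :=
  Matrix.of fun i j => (G i j).coeff 0

/-- The state index set of the controller canonical form of `G`. -/
abbrev States {k n : ℕ} (G : Matrix (Fin k) (Fin n) (Polynomial F)) : Type :=
  StateIdx k (rowDeg F G)

def matA {k n : ℕ} (G : Matrix (Fin k) (Fin n) (Polynomial F)) :
    Matrix (States F G) (States F G) F := ccfA F (rowDeg F G)

def matB {k n : ℕ} (G : Matrix (Fin k) (Fin n) (Polynomial F)) :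
    Matrix (Fin k) (States F G) F := ccfB F (rowDeg F G)

def matC {k n : ℕ} (G : Matrix (Fin k) (Fin n) (Polynomial F)) :
    Matrix (States F G) (Fin n) F := ccfC F (rowDeg F G) G

def matE {k n : ℕ} (G : Matrix (Fin k) (Fin n) (Polynomial F)) :
    Matrix (Fin k) (Fin n) F := ccfE F G

/-- The weight adjacency matrix of a state space realization `(A,B,C,E)`. -/
def WAM {σ : Type} [Fintype σ] {k n : ℕ} (A : Matrix σ σ F) (B : Matrix (Fin k) σ F)
    (C : Matrix σ (Fin n) F) (E : Matrix (Fin k) (Fin n) F) :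
    Matrix (σ → F) (σ → F) (Polynomial ℂ) :=
  Matrix.of fun X Y =>
    weSet F {v | ∃ u : Fin k → F, Y = X ᵥ* A + u ᵥ* B ∧ v = X ᵥ* C + u ᵥ* E}

/-- The weight adjacency matrix of an encoder `G` (via its controller canonical form). -/
def wam {k n : ℕ} (G : Matrix (Fin k) (Fin n) (Polynomial F)) :
    Matrix (States F G → F) (States F G → F) (Polynomial ℂ) :=
  WAM F (matA F G) (matB F G) (matC F G) (matE F G)

/-- The block code `C_const = 𝓒 ∩ F^n` of constant codewords. -/
def constSet {k n : ℕ} (G : Matrix (Fin k) (Fin n) (Polynomial F)) : Set (Fin n → F) :=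
  {w | (fun j => Polynomial.C (w j)) ∈ code F G}

/-- The block code `C_coeff` of coefficient vectors of codewords. -/
def coeffSet {k n : ℕ} (G : Matrix (Fin k) (Fin n) (Polynomial F)) : Set (Fin n → F) :=
  {w | ∃ v ∈ code F G, ∃ t : ℕ, ∀ j, (v j).coeff t = w j}

/-- The dual of a block code. -/
def blockDual {n : ℕ} (S : Set (Fin n → F)) : Set (Fin n → F) :=
  {w | ∀ v ∈ S, w ⬝ᵥ v = 0}

/-- `Δ`: the set of state pairs `(X,Y)` admitting a transition `Y = XA + uB`. -/
def Delta {k n : ℕ} (G : Matrix (Fin k) (Fin n) (Polynomial F)) :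
    Set ((States F G → F) × (States F G → F)) :=
  {p | ∃ u : Fin k → F, p.2 = p.1 ᵥ* matA F G + u ᵥ* matB F G}

/-- `Δ⁻ = {(0,Y) : Y ∈ im A}`. -/
def DeltaMinus {k n : ℕ} (G : Matrix (Fin k) (Fin n) (Polynomial F)) :
    Set ((States F G → F) × (States F G → F)) :=
  {p | p.1 = 0 ∧ ∃ X : States F G → F, p.2 = X ᵥ* matA F G}

/-- `Ω = {(X,Y) ∈ Δ : XC + Y Bᵀ E ∈ C_const}`. -/
def Omega {k n : ℕ} (G : Matrix (Fin k) (Fin n) (Polynomial F)) :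
    Set ((States F G → F) × (States F G → F)) :=
  {p | p ∈ Delta F G ∧
    p.1 ᵥ* matC F G + (p.2 ᵥ* (matB F G)ᵀ) ᵥ* matE F G ∈ constSet F G}

/-- Orthogonal of a set of state pairs with respect to the standard bilinear form on `F^{2δ}`. -/
def pairPerp {σ : Type} [Fintype σ] (S : Set ((σ → F) × (σ → F))) :
    Set ((σ → F) × (σ → F)) :=
  {p | ∀ s ∈ S, p.1 ⬝ᵥ s.1 + p.2 ⬝ᵥ s.2 = 0}

/-- `S_0 = Bᵀ E` and `S_i = Bᵀ B A^{i-1} C` for `i ≥ 1`. -/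
def Smat {k n : ℕ} (d : Fin k → ℕ) (G : Matrix (Fin k) (Fin n) (Polynomial F)) :
    ℕ → Matrix (StateIdx k d) (Fin n) F
  | 0 => (ccfB F d)ᵀ * ccfE F G
  | (i + 1) => (ccfB F d)ᵀ * ccfB F d * ccfA F d ^ i * ccfC F d G

def Sm {k n : ℕ} (G : Matrix (Fin k) (Fin n) (Polynomial F)) :
    ℕ → Matrix (States F G) (Fin n) F := Smat F (rowDeg F G) G

/-- The matrix `N = ∑_{m≥2} ∑_{i=1}^{m-1} ∑_{j=0}^{i-1} (Âᵀ)^{i-1} Ŝ_j S_{m-j}ᵀ A^{m-(i+1)}`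
(all summands with `m ≥ δ + δ̂` vanish, so the sum is truncated there). -/
def Nm {k kb n : ℕ} (G : Matrix (Fin k) (Fin n) (Polynomial F))
    (Gh : Matrix (Fin kb) (Fin n) (Polynomial F)) :
    Matrix (States F Gh) (States F G) F :=
  ∑ m ∈ Finset.Icc 2 (Fintype.card (States F G) + Fintype.card (States F Gh)),
    ∑ i ∈ Finset.Icc 1 (m - 1), ∑ j ∈ Finset.range i,
      (matA F Gh)ᵀ ^ (i - 1) * Sm F Gh j * (Sm F G (m - j))ᵀ * matA F G ^ (m - (i + 1))

/-- The reciprocal matrix `G' = diag(D^{δ_1},…,D^{δ_k}) · G(D⁻¹)`. -/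
def recip {k n : ℕ} (G : Matrix (Fin k) (Fin n) (Polynomial F)) :
    Matrix (Fin k) (Fin n) (Polynomial F) :=
  Matrix.of fun i j => (G i j).reflect (rowDeg F G i)

/-- The block diagonal matrix `R` whose blocks are the anti-identity matrices. -/
def Rmat {k : ℕ} (d : Fin k → ℕ) : Matrix (StateIdx k d) (StateIdx k d) F :=
  Matrix.of fun s t => if s.1 = t.1 ∧ (s.2 : ℕ) + (t.2 : ℕ) + 1 = d s.1 then 1 else 0

/-- The MacWilliams matrix `𝓗 = q^{-δ/2} (ζ^{τ(X Yᵀ)})_{X,Y}`. -/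
def macH (σ : Type) [Fintype σ] (p : ℕ) [Algebra (ZMod p) F] (ζ : ℂ) :
    Matrix (σ → F) (σ → F) ℂ :=
  Matrix.of fun X Y =>
    (((Real.sqrt (Fintype.card F) : ℝ) : ℂ))⁻¹ ^ Fintype.card σ *
      ζ ^ (Algebra.trace (ZMod p) F (X ⬝ᵥ Y)).val

/-- The MacWilliams transform `H(f)(W) = (1+(q-1)W)^n f((1-W)/(1+(q-1)W))`
on polynomials of degree at most `n`. -/
def macWT (q n : ℕ) (f : Polynomial ℂ) : Polynomial ℂ :=
  ∑ j ∈ Finset.range (n + 1),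
    Polynomial.C (f.coeff j) * (1 - Polynomial.X) ^ j *
      (1 + Polynomial.C ((q : ℂ) - 1) * Polynomial.X) ^ (n - j)

end ConvCode

/-!
Write `ĝ_a`, `g_b` for the rows of `Ĝ` and `G` and `ĝ_{a,t}`, `g_{b,t}` for their coefficient
vectors. At the pair of states `(a, μ)` of `Ĝ` and `(b, ν)` of `G`, only the summand
`m = μ + ν + 2`, `i = μ + 1` of `N` survives, and `N` contributes `∑_{t ≤ μ} ĝ_{a,t} g_{b,μ+ν+2-t}ᵀ`;
symmetrically `N̂ᵀ` contributes the terms with `t ≥ μ + 2`, and `Ĉ Cᵀ` is the middle term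
`ĝ_{a,μ+1} g_{b,ν+1}ᵀ`. Together they form the coefficient of `D^{μ+ν+2}` in `ĝ_a g_bᵀ`, which is
zero because `Ĝ` encodes the dual code.
-/

namespace Polynomial

lemma coeff_mul_add_add_two {R : Type*} [CommSemiring R] (p q : R[X]) (a b : ℕ) :
    (p * q).coeff (a + b + 2) =
      ∑ x ∈ Finset.range (a + 1), p.coeff x * q.coeff (a + b + 2 - x) +
        p.coeff (a + 1) * q.coeff (b + 1) +
        ∑ x ∈ Finset.range (b + 1), q.coeff x * p.coeff (b + a + 2 - x) := by
  rw [coeff_mul, Finset.Nat.sum_antidiagonal_eq_sum_range_succ_mk,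
    show (a + b + 2).succ = a + 1 + 1 + (b + 1) by omega, Finset.sum_range_add,
    Finset.sum_range_succ,
    ← Finset.sum_range_reflect (fun x => q.coeff x * p.coeff (b + a + 2 - x)) (b + 1)]
  congr 1
  · simp only [show a + b + 2 - (a + 1) = b + 1 by omega]
  · refine Finset.sum_congr rfl fun x hx => ?_
    rw [Finset.mem_range] at hx
    rw [mul_comm]
    congr 2 <;> omega

end Polynomial

namespace ConvCode

section ControllerCanonicalForm

variable {F : Type} [Field F] {k : ℕ} {d : Fin k → ℕ}

lemma card_stateIdx (d : Fin k → ℕ) : Fintype.card (StateIdx k d) = ∑ i, d i := by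
  simp [StateIdx, Fintype.card_sigma]

lemma val_snd_lt_card_stateIdx (s : StateIdx k d) :
    (s.2 : ℕ) < Fintype.card (StateIdx k d) := by
  rw [card_stateIdx]
  exact s.2.isLt.trans_le (Finset.single_le_sum (fun i _ => Nat.zero_le (d i)) (Finset.mem_univ _))

lemma StateIdx.eq_mk_iff {x : StateIdx k d} {i : Fin k} {m : ℕ} (hm : m < d i) :
    x = ⟨i, ⟨m, hm⟩⟩ ↔ x.1 = i ∧ (x.2 : ℕ) = m := by
  obtain ⟨i', m'⟩ := x
  constructor
  · rintro ⟨⟩; exact ⟨rfl, rfl⟩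
  · rintro ⟨rfl, h⟩; simp only at h; subst h; rfl

lemma sum_ite_stateIdx {R : Type} [AddCommMonoid R] (P : StateIdx k d → Prop) [DecidablePred P]
    {i : Fin k} {m : ℕ} (hP : ∀ x, P x ↔ x.1 = i ∧ (x.2 : ℕ) = m) (f : StateIdx k d → R) :
    ∑ x, (if P x then f x else 0) = if h : m < d i then f ⟨i, ⟨m, h⟩⟩ else 0 := by
  split_ifs with h
  · simp_rw [hP, ← StateIdx.eq_mk_iff h]
    exact Fintype.sum_ite_eq' _ f
  · refine Finset.sum_eq_zero fun x _ => if_neg fun hx => h ?_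
    obtain ⟨rfl, rfl⟩ := (hP x).1 hx
    exact x.2.isLt

lemma ccfA_mul_apply {ι : Type} (M : Matrix (StateIdx k d) ι F) (s : StateIdx k d) (j : ι) :
    (ccfA F d * M) s j = if h : (s.2 : ℕ) + 1 < d s.1 then M ⟨s.1, ⟨s.2 + 1, h⟩⟩ j else 0 := by
  simp only [Matrix.mul_apply, ccfA, Matrix.of_apply, ite_mul, one_mul, zero_mul]
  exact sum_ite_stateIdx _ (fun _ => and_congr eq_comm eq_comm) _

lemma ccfA_transpose_mul_apply {ι : Type} (M : Matrix (StateIdx k d) ι F) (s : StateIdx k d)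
    (j : ι) :
    ((ccfA F d)ᵀ * M) s j = if 1 ≤ (s.2 : ℕ) then M ⟨s.1, ⟨s.2 - 1, by omega⟩⟩ j else 0 := by
  simp only [Matrix.mul_apply, Matrix.transpose_apply, ccfA, Matrix.of_apply, ite_mul, one_mul,
    zero_mul]
  split_ifs with hs
  · rw [sum_ite_stateIdx _ (m := s.2 - 1) fun x => and_congr Iff.rfl (by omega), dif_pos (by omega)]
  · exact Finset.sum_eq_zero fun x _ => if_neg fun hx => hs (by omega)

lemma ccfB_transpose_mul_apply {ι : Type} (M : Matrix (Fin k) ι F) (s : StateIdx k d) (j : ι) :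
    ((ccfB F d)ᵀ * M) s j = if (s.2 : ℕ) = 0 then M s.1 j else 0 := by
  simp only [Matrix.mul_apply, Matrix.transpose_apply, ccfB, Matrix.of_apply, ite_and,
    ite_mul, one_mul, zero_mul, Finset.sum_ite_eq, Finset.mem_univ, if_true]

lemma ccfA_pow_mul_apply {ι : Type} (M : Matrix (StateIdx k d) ι F) (p : ℕ) (s : StateIdx k d)
    (j : ι) :
    (ccfA F d ^ p * M) s j = if h : (s.2 : ℕ) + p < d s.1 then M ⟨s.1, ⟨s.2 + p, h⟩⟩ j else 0 := by
  induction p generalizing s with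
  | zero => simp
  | succ p ih =>
    rw [pow_succ', Matrix.mul_assoc, ccfA_mul_apply]
    split_ifs with h₁ h₂ h₂
    · rw [ih]
      dsimp only
      rw [dif_pos (by omega)]
      congr 3
      omega
    · rw [ih]
      dsimp only
      rw [dif_neg (by omega)]
    · omega
    · rfl

lemma ccfA_transpose_pow_mul_apply {ι : Type} (M : Matrix (StateIdx k d) ι F) (p : ℕ)
    (s : StateIdx k d) (j : ι) :
    ((ccfA F d)ᵀ ^ p * M) s j =
      if p ≤ (s.2 : ℕ) then M ⟨s.1, ⟨s.2 - p, by omega⟩⟩ j else 0 := by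
  induction p generalizing s with
  | zero => simp
  | succ p ih =>
    rw [pow_succ', Matrix.mul_assoc, ccfA_transpose_mul_apply]
    split_ifs with h₁ h₂ h₂
    · rw [ih]
      dsimp only
      rw [if_pos (by omega)]
      congr 3
      omega
    · rw [ih]
      dsimp only
      rw [if_neg (by omega)]
    · omega
    · rfl

lemma ccfB_mul_apply {ι : Type} (M : Matrix (StateIdx k d) ι F) (i : Fin k) (j : ι) :
    (ccfB F d * M) i j = if h : 0 < d i then M ⟨i, ⟨0, h⟩⟩ j else 0 := by
  simp only [Matrix.mul_apply, ccfB, Matrix.of_apply, ite_mul, one_mul, zero_mul]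
  exact sum_ite_stateIdx _ (fun x => Iff.rfl) _

lemma Smat_apply {n : ℕ} {G : Matrix (Fin k) (Fin n) F[X]} (hG : ∀ i j, (G i j).natDegree ≤ d i)
    (r : ℕ) (s : StateIdx k d) (j : Fin n) :
    Smat F d G r s j = if (s.2 : ℕ) = 0 then (G s.1 j).coeff r else 0 := by
  cases r with
  | zero => rw [Smat, ccfB_transpose_mul_apply]; rfl
  | succ t =>
    have hpos : 0 < d s.1 := s.2.pos
    rw [Smat, Matrix.mul_assoc, Matrix.mul_assoc, ccfB_transpose_mul_apply, ccfB_mul_apply,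
      dif_pos hpos, ccfA_pow_mul_apply]
    simp only [zero_add, ccfC, Matrix.of_apply]
    split_ifs
    · rfl
    · rw [Polynomial.coeff_eq_zero_of_natDegree_lt (by have := hG s.1 j; omega)]
    · rfl

lemma ccfA_transpose_pow_mul_Smat_apply {n : ℕ} {G : Matrix (Fin k) (Fin n) F[X]}
    (hG : ∀ i j, (G i j).natDegree ≤ d i) (p r : ℕ) (s : StateIdx k d) (j : Fin n) :
    ((ccfA F d)ᵀ ^ p * Smat F d G r) s j = if (s.2 : ℕ) = p then (G s.1 j).coeff r else 0 := by
  rw [ccfA_transpose_pow_mul_apply, Smat_apply hG]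
  dsimp only
  split_ifs <;> first | rfl | omega

end ControllerCanonicalForm

section Encoders

variable {F : Type} [Field F] {k kb n : ℕ}

lemma natDegree_le_rowDeg (G : Matrix (Fin k) (Fin n) F[X]) (i : Fin k) (j : Fin n) :
    (G i j).natDegree ≤ rowDeg F G i :=
  Finset.le_sup (f := fun j => (G i j).natDegree) (Finset.mem_univ j)

lemma Nm_summand_apply (G : Matrix (Fin k) (Fin n) F[X]) (Gh : Matrix (Fin kb) (Fin n) F[X])
    (m i r : ℕ) (sh : States F Gh) (s : States F G) :
    ((matA F Gh)ᵀ ^ (i - 1) * Sm F Gh r * (Sm F G (m - r))ᵀ * matA F G ^ (m - (i + 1))) sh s =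
      if (sh.2 : ℕ) = i - 1 ∧ (s.2 : ℕ) = m - (i + 1) then
        ∑ j, (Gh sh.1 j).coeff r * (G s.1 j).coeff (m - r) else 0 := by
  have htranspose : ∀ j, ((Sm F G (m - r))ᵀ * matA F G ^ (m - (i + 1))) j s =
      ((matA F G)ᵀ ^ (m - (i + 1)) * Sm F G (m - r)) s j := fun j => by
    rw [← Matrix.transpose_apply (_ * _), Matrix.transpose_mul, Matrix.transpose_transpose,
      Matrix.transpose_pow]
  rw [Matrix.mul_assoc, Matrix.mul_apply]
  simp only [htranspose]
  simp only [matA, Sm, ccfA_transpose_pow_mul_Smat_apply (natDegree_le_rowDeg _),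
    ite_zero_mul_ite_zero, Finset.sum_ite_irrel, Finset.sum_const_zero]

lemma Nm_apply (G : Matrix (Fin k) (Fin n) F[X]) (Gh : Matrix (Fin kb) (Fin n) F[X])
    (sh : States F Gh) (s : States F G) :
    Nm F G Gh sh s = ∑ r ∈ Finset.range ((sh.2 : ℕ) + 1), ∑ j,
      (Gh sh.1 j).coeff r * (G s.1 j).coeff ((sh.2 : ℕ) + (s.2 : ℕ) + 2 - r) := by
  have hs : (s.2 : ℕ) < Fintype.card (States F G) := val_snd_lt_card_stateIdx s
  have hsh : (sh.2 : ℕ) < Fintype.card (States F Gh) := val_snd_lt_card_stateIdx sh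
  simp only [Nm, Matrix.sum_apply, Nm_summand_apply]
  rw [Finset.sum_eq_single_of_mem ((sh.2 : ℕ) + (s.2 : ℕ) + 2)
      (Finset.mem_Icc.mpr ⟨by omega, by omega⟩),
    Finset.sum_eq_single_of_mem ((sh.2 : ℕ) + 1) (Finset.mem_Icc.mpr ⟨by omega, by omega⟩)]
  · exact Finset.sum_congr rfl fun r _ => if_pos ⟨by omega, by omega⟩
  · intro i hi hne
    exact Finset.sum_eq_zero fun r _ => if_neg fun h => hne (by omega)
  · intro m hm hne
    refine Finset.sum_eq_zero fun i hi => Finset.sum_eq_zero fun r _ => if_neg fun h => hne ?_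
    rw [Finset.mem_Icc] at hi
    omega

lemma row_mem_code (G : Matrix (Fin k) (Fin n) F[X]) (i : Fin k) : G i ∈ code F G :=
  ⟨Pi.single i 1, Matrix.single_one_vecMul i G⟩

lemma dotProduct_rows_eq_zero {G : Matrix (Fin k) (Fin n) F[X]} {Gh : Matrix (Fin kb) (Fin n) F[X]}
    (hdual : code F Gh = dualCode F (code F G)) (a : Fin kb) (b : Fin k) : Gh a ⬝ᵥ G b = 0 := by
  have h := row_mem_code Gh a
  rw [hdual] at h
  exact h _ (row_mem_code G b)

end Encoders

end ConvCode

theorem statement13_general {F : Type} [Field F]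
    (k kb n : ℕ)
    (G : Matrix (Fin k) (Fin n) (Polynomial F))
    (Gh : Matrix (Fin kb) (Fin n) (Polynomial F))
    (hdual : ConvCode.code F Gh = ConvCode.dualCode F (ConvCode.code F G)) :
    ConvCode.Nm F G Gh + (ConvCode.Nm F Gh G)ᵀ =
      -(ConvCode.matC F Gh * (ConvCode.matC F G)ᵀ) := by
  ext sh s
  have hcoeff := congrArg (coeff · ((sh.2 : ℕ) + s.2 + 2))
    (ConvCode.dotProduct_rows_eq_zero hdual sh.1 s.1)
  simp only [dotProduct, finsetSum_coeff, coeff_mul_add_add_two, Finset.sum_add_distrib,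
    coeff_zero] at hcoeff
  rw [Matrix.add_apply, Matrix.transpose_apply, ConvCode.Nm_apply, ConvCode.Nm_apply,
    Matrix.neg_apply, Matrix.mul_apply]
  simp only [ConvCode.matC, ConvCode.ccfC, Matrix.of_apply, Matrix.transpose_apply]
  rw [Finset.sum_comm (s := Finset.range _), Finset.sum_comm (s := Finset.range ((s.2 : ℕ) + 1))]
  linear_combination hcoeff

/-- Proposition 4.7(a): `N + N̂ᵀ = −Ĉ Cᵀ`. -/
theorem statement13 {F : Type} [Field F] [Fintype F]
    (k kb n : ℕ) (hkn : k + kb = n)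
    (G : Matrix (Fin k) (Fin n) (Polynomial F)) (hG : ConvCode.IsMinimalEncoder F G)
    (Gh : Matrix (Fin kb) (Fin n) (Polynomial F)) (hGh : ConvCode.IsMinimalEncoder F Gh)
    (hdual : ConvCode.code F Gh = ConvCode.dualCode F (ConvCode.code F G)) :
    ConvCode.Nm F G Gh + (ConvCode.Nm F Gh G)ᵀ =
      -(ConvCode.matC F Gh * (ConvCode.matC F G)ᵀ) :=
  statement13_general k kb n G Gh hdual
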